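/- Let v be a unit vector in H₃ whose minimal local eigenvalues lie in the interior of the Kirwan polytope, i.e., p_i(v) < 1/2 for all i ∈ {1,2,3} and p_i(v) < p_j(v) + p_k(v) for every permutation (i,j,k) of (1,2,3). Then there exists a unit vector w ∈ H₃ with p_i(w) = p_i(v) for i = 1,2,3 that is not LU-equivalent to v. In other words, such a state is never determined, up to local unitaries, by the spectra of its one-qubit reduced density matrices. -/

import Mathlib

open scoped BigOperators

/-- The three-qubit Hilbert space. -/
abbrev H3 := (Fin 2 × Fin 2 × Fin 2) → ℂ

/-- Squared Hermitian norm of a vector in `H3`. -/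
noncomputable def normSq3 (v : H3) : ℝ := ∑ x : Fin 2 × Fin 2 × Fin 2, Complex.normSq (v x)

/-- First one-qubit reduced density matrix. -/
noncomputable def rho1 (v : H3) : Matrix (Fin 2) (Fin 2) ℂ :=
  Matrix.of fun a a' => ∑ b : Fin 2, ∑ c : Fin 2, v (a, b, c) * star (v (a', b, c))

/-- Second one-qubit reduced density matrix. -/
noncomputable def rho2 (v : H3) : Matrix (Fin 2) (Fin 2) ℂ :=
  Matrix.of fun b b' => ∑ a : Fin 2, ∑ c : Fin 2, v (a, b, c) * star (v (a, b', c))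

/-- Third one-qubit reduced density matrix. -/
noncomputable def rho3 (v : H3) : Matrix (Fin 2) (Fin 2) ℂ :=
  Matrix.of fun c c' => ∑ a : Fin 2, ∑ b : Fin 2, v (a, b, c) * star (v (a, b, c'))

/-- Minimal (real) eigenvalue of a 2×2 complex matrix. -/
noncomputable def minEig (ρ : Matrix (Fin 2) (Fin 2) ℂ) : ℝ :=
  sInf {t : ℝ | (t : ℂ) ∈ spectrum ℂ ρ}

noncomputable def p1 (v : H3) : ℝ := minEig (rho1 v)
noncomputable def p2 (v : H3) : ℝ := minEig (rho2 v)
noncomputable def p3 (v : H3) : ℝ := minEig (rho3 v)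

/-- The action of a triple of 2×2 matrices on `H3` by the tensor product. -/
noncomputable def tensor3 (A1 A2 A3 : Matrix (Fin 2) (Fin 2) ℂ) (v : H3) : H3 :=
  fun x => ∑ a' : Fin 2, ∑ b' : Fin 2, ∑ c' : Fin 2,
    A1 x.1 a' * A2 x.2.1 b' * A3 x.2.2 c' * v (a', b', c')

/-- Local unitary equivalence of three-qubit states. -/
def LUequiv (v w : H3) : Prop :=
  ∃ U1 U2 U3 : Matrix (Fin 2) (Fin 2) ℂ,
    U1 ∈ Matrix.unitaryGroup (Fin 2) ℂ ∧ U2 ∈ Matrix.unitaryGroup (Fin 2) ℂ ∧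
    U3 ∈ Matrix.unitaryGroup (Fin 2) ℂ ∧ w = tensor3 U1 U2 U3 v

/-- The three-qubit W state. -/
noncomputable def wState : H3 := fun x =>
  if (x.1 = 1 ∧ x.2.1 = 0 ∧ x.2.2 = 0) ∨ (x.1 = 0 ∧ x.2.1 = 1 ∧ x.2.2 = 0) ∨
      (x.1 = 0 ∧ x.2.1 = 0 ∧ x.2.2 = 1)
  then ((1 / Real.sqrt 3 : ℝ) : ℂ) else 0

/-- The SLOCC class of the W state. -/
def WClass : Set H3 :=
  {v | ∃ (A1 A2 A3 : Matrix (Fin 2) (Fin 2) ℂ) (l : ℂ),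
    A1.det = 1 ∧ A2.det = 1 ∧ A3.det = 1 ∧ l ≠ 0 ∧ v = l • tensor3 A1 A2 A3 wState}

/-!
For `P₁, P₂, P₃` in the open Kirwan polytope we build a state
`a|000⟩ + b|011⟩ + c|101⟩ + d|110⟩ + f|111⟩` with positive real amplitudes whose one-qubit
reduced density matrices have minimal eigenvalues `P₁, P₂, P₃`. Each `ρᵢ` has trace one, so its
spectrum is fixed by its determinant, and these determinants see `d` only through `d ^ 2`: the
state with `d` replaced by `-d` has the same local spectra. The norm of Cayley's hyperdeterminant
is an LU invariant, and it equals `(a f) ^ 2 + 4 a b c d` and `|(a f) ^ 2 - 4 a b c d|` on the two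
states. These differ, so `v` is LU-inequivalent to one of them.

The amplitudes perturb the solution with `f = 0`, where the `ρᵢ` are diagonal. With `g = f ^ 2`
and `h = a ^ 2 g`, the determinant conditions become `Mᵢ (1 - g - Mᵢ) = Pᵢ (1 - Pᵢ) - h` for the
partial sums `Mᵢ` of the weights, solved by the smaller root; for `g` small these roots still
satisfy the strict triangle inequalities, and `h` is then found as a fixed point of a continuous
self-map of `[0, g]`.
-/

open Filter Topology Set

theorem minEig_eq_of_trace_of_det {M : Matrix (Fin 2) (Fin 2) ℂ} {p q : ℝ} (hpq : p ≤ q)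
    (htr : M.trace = p + q) (hdet : M.det = p * q) : minEig M = p := by
  have hspec : ∀ t : ℝ, (t : ℂ) ∈ spectrum ℂ M ↔ t = p ∨ t = q := by
    intro t
    have hchar : (algebraMap ℂ _ (t : ℂ) - M).det = ((t - p) * (t - q) : ℝ) := by
      rw [Matrix.trace_fin_two] at htr
      rw [Matrix.det_fin_two] at hdet ⊢
      simp only [Fin.isValue, Matrix.sub_apply, Matrix.algebraMap_matrix_apply, ↓reduceIte,
        Algebra.algebraMap_self, RingHom.id_apply, zero_ne_one, zero_sub, one_ne_zero, mul_neg,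
        neg_mul, neg_neg, Complex.ofReal_mul, Complex.ofReal_sub]
      linear_combination (-(t : ℂ)) * htr + hdet
    rw [spectrum.mem_iff, Matrix.isUnit_iff_isUnit_det, isUnit_iff_ne_zero, not_not, hchar,
      Complex.ofReal_eq_zero, mul_eq_zero, sub_eq_zero, sub_eq_zero]
  have hset : {t : ℝ | (t : ℂ) ∈ spectrum ℂ M} = {p, q} := by
    ext t
    simp [hspec]
  rw [minEig, hset, csInf_pair, min_eq_left hpq]

theorem minEig_eq_of_trace_eq_one {M : Matrix (Fin 2) (Fin 2) ℂ} {P : ℝ} (hP : P ≤ 1 / 2)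
    (htr : M.trace = 1) (hdet : M.det = P * (1 - P)) : minEig M = P :=
  minEig_eq_of_trace_of_det (q := 1 - P) (by linarith) (by rw [htr]; push_cast; ring)
    (by rw [hdet]; push_cast; ring)

noncomputable def fiveTermState (a b c d f : ℝ) : H3 := fun x =>
  if x = (0, 0, 0) then a else if x = (0, 1, 1) then b else if x = (1, 0, 1) then c
  else if x = (1, 1, 0) then d else if x = (1, 1, 1) then f else 0

theorem normSq3_fiveTermState (a b c d f : ℝ) :
    normSq3 (fiveTermState a b c d f) = a ^ 2 + b ^ 2 + c ^ 2 + d ^ 2 + f ^ 2 := by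
  simp only [normSq3, Fintype.sum_prod_type, Fin.sum_univ_two, fiveTermState, Prod.ext_iff,
    Fin.isValue, zero_ne_one, one_ne_zero, and_true, and_false, ↓reduceIte, Complex.normSq_ofReal,
    map_zero, add_zero, zero_add]
  ring

section Spectra

variable {a b c d f P : ℝ} (hP : P ≤ 1 / 2) (hnorm : a ^ 2 + b ^ 2 + c ^ 2 + d ^ 2 + f ^ 2 = 1)
include hP hnorm

theorem p1_fiveTermState (h : (a ^ 2 + b ^ 2) * (c ^ 2 + d ^ 2) + a ^ 2 * f ^ 2 = P * (1 - P)) :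
    p1 (fiveTermState a b c d f) = P := by
  apply minEig_eq_of_trace_eq_one hP
  · simp only [rho1, fiveTermState, Fin.isValue, Prod.ext_iff, RCLike.star_def, ite_mul, zero_mul,
      Fin.sum_univ_two, and_true, zero_ne_one, and_false, ↓reduceIte, one_ne_zero,
      Matrix.trace_fin_two, Matrix.of_apply, Complex.conj_ofReal, add_zero, zero_add]
    norm_cast
    linear_combination hnorm
  · simp only [rho1, fiveTermState, Fin.isValue, Prod.ext_iff, RCLike.star_def, ite_mul, zero_mul,
      Fin.sum_univ_two, and_true, zero_ne_one, and_false, ↓reduceIte, one_ne_zero,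
      Matrix.det_fin_two, Matrix.of_apply, Complex.conj_ofReal, add_zero, zero_add, map_zero,
      mul_zero]
    norm_cast
    linear_combination h

theorem p2_fiveTermState (h : (a ^ 2 + c ^ 2) * (b ^ 2 + d ^ 2) + a ^ 2 * f ^ 2 = P * (1 - P)) :
    p2 (fiveTermState a b c d f) = P := by
  apply minEig_eq_of_trace_eq_one hP
  · simp only [rho2, fiveTermState, Fin.isValue, Prod.ext_iff, RCLike.star_def, ite_mul, zero_mul,
      Fin.sum_univ_two, and_true, zero_ne_one, and_false, ↓reduceIte, one_ne_zero, true_and,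
      false_and, Matrix.trace_fin_two, Matrix.of_apply, Complex.conj_ofReal, add_zero, zero_add]
    norm_cast
    linear_combination hnorm
  · simp only [rho2, fiveTermState, Fin.isValue, Prod.ext_iff, RCLike.star_def, ite_mul, zero_mul,
      Fin.sum_univ_two, and_true, zero_ne_one, and_false, ↓reduceIte, one_ne_zero, true_and,
      false_and, Matrix.det_fin_two, Matrix.of_apply, Complex.conj_ofReal, add_zero, zero_add,
      map_zero, mul_zero]
    norm_cast
    linear_combination h

theorem p3_fiveTermState (h : (a ^ 2 + d ^ 2) * (b ^ 2 + c ^ 2) + a ^ 2 * f ^ 2 = P * (1 - P)) :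
    p3 (fiveTermState a b c d f) = P := by
  apply minEig_eq_of_trace_eq_one hP
  · simp only [rho3, fiveTermState, Fin.isValue, Prod.ext_iff, RCLike.star_def, ite_mul, zero_mul,
      Fin.sum_univ_two, true_and, zero_ne_one, false_and, and_false, ↓reduceIte, one_ne_zero,
      Matrix.trace_fin_two, Matrix.of_apply, Complex.conj_ofReal, add_zero, zero_add]
    norm_cast
    linear_combination hnorm
  · simp only [rho3, fiveTermState, Fin.isValue, Prod.ext_iff, RCLike.star_def, ite_mul, zero_mul,
      Fin.sum_univ_two, true_and, zero_ne_one, false_and, and_false, ↓reduceIte, one_ne_zero,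
      Matrix.det_fin_two, Matrix.of_apply, Complex.conj_ofReal, add_zero, zero_add, map_zero,
      mul_zero]
    norm_cast
    linear_combination h

end Spectra

theorem fiveTermState_spectra {a b c d f P₁ P₂ P₃ : ℝ} (h₁ : P₁ ≤ 1 / 2) (h₂ : P₂ ≤ 1 / 2)
    (h₃ : P₃ ≤ 1 / 2) (hnorm : a ^ 2 + b ^ 2 + c ^ 2 + d ^ 2 + f ^ 2 = 1)
    (e₁ : (a ^ 2 + b ^ 2) * (c ^ 2 + d ^ 2) + a ^ 2 * f ^ 2 = P₁ * (1 - P₁))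
    (e₂ : (a ^ 2 + c ^ 2) * (b ^ 2 + d ^ 2) + a ^ 2 * f ^ 2 = P₂ * (1 - P₂))
    (e₃ : (a ^ 2 + d ^ 2) * (b ^ 2 + c ^ 2) + a ^ 2 * f ^ 2 = P₃ * (1 - P₃)) :
    normSq3 (fiveTermState a b c d f) = 1 ∧ p1 (fiveTermState a b c d f) = P₁ ∧
      p2 (fiveTermState a b c d f) = P₂ ∧ p3 (fiveTermState a b c d f) = P₃ :=
  ⟨(normSq3_fiveTermState a b c d f).trans hnorm, p1_fiveTermState h₁ hnorm e₁,
    p2_fiveTermState h₂ hnorm e₂, p3_fiveTermState h₃ hnorm e₃⟩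

-- the discriminant of the binary quadratic form `(s, t) ↦ det (s V₀ + t V₁)`, where `Vₐ` is the
-- slice `(b, c) ↦ v (a, b, c)`
def cayleyHyperdet (v : H3) : ℂ :=
  (v (0, 0, 0) * v (1, 1, 1) + v (1, 0, 0) * v (0, 1, 1)
    - v (0, 0, 1) * v (1, 1, 0) - v (0, 1, 0) * v (1, 0, 1)) ^ 2
  - 4 * (v (0, 0, 0) * v (0, 1, 1) - v (0, 0, 1) * v (0, 1, 0))
      * (v (1, 0, 0) * v (1, 1, 1) - v (1, 0, 1) * v (1, 1, 0))

section LocalAction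

variable (A : Matrix (Fin 2) (Fin 2) ℂ) (v : H3)

theorem tensor3_left_apply (x : Fin 2 × Fin 2 × Fin 2) :
    tensor3 A 1 1 v x = ∑ a, A x.1 a * v (a, x.2.1, x.2.2) := by
  simp [tensor3, Matrix.one_apply]

theorem tensor3_middle_apply (x : Fin 2 × Fin 2 × Fin 2) :
    tensor3 1 A 1 v x = ∑ b, A x.2.1 b * v (x.1, b, x.2.2) := by
  simp [tensor3, Matrix.one_apply]

theorem tensor3_right_apply (x : Fin 2 × Fin 2 × Fin 2) :
    tensor3 1 1 A v x = ∑ c, A x.2.2 c * v (x.1, x.2.1, c) := by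
  simp [tensor3, Matrix.one_apply]

theorem tensor3_eq_comp (A₁ A₂ A₃ : Matrix (Fin 2) (Fin 2) ℂ) :
    tensor3 A₁ A₂ A₃ v = tensor3 A₁ 1 1 (tensor3 1 A₂ 1 (tensor3 1 1 A₃ v)) := by
  ext x
  simp only [tensor3_left_apply, tensor3_middle_apply, tensor3_right_apply]
  simp only [tensor3, Finset.mul_sum, mul_assoc]

theorem cayleyHyperdet_tensor3_left :
    cayleyHyperdet (tensor3 A 1 1 v) = A.det ^ 2 * cayleyHyperdet v := by
  simp only [cayleyHyperdet, tensor3_left_apply, Fin.sum_univ_two, Matrix.det_fin_two]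
  ring

theorem cayleyHyperdet_tensor3_middle :
    cayleyHyperdet (tensor3 1 A 1 v) = A.det ^ 2 * cayleyHyperdet v := by
  simp only [cayleyHyperdet, tensor3_middle_apply, Fin.sum_univ_two, Matrix.det_fin_two]
  ring

theorem cayleyHyperdet_tensor3_right :
    cayleyHyperdet (tensor3 1 1 A v) = A.det ^ 2 * cayleyHyperdet v := by
  simp only [cayleyHyperdet, tensor3_right_apply, Fin.sum_univ_two, Matrix.det_fin_two]
  ring

end LocalAction

theorem cayleyHyperdet_tensor3 (A₁ A₂ A₃ : Matrix (Fin 2) (Fin 2) ℂ) (v : H3) :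
    cayleyHyperdet (tensor3 A₁ A₂ A₃ v) = (A₁.det * A₂.det * A₃.det) ^ 2 * cayleyHyperdet v := by
  rw [tensor3_eq_comp, cayleyHyperdet_tensor3_left, cayleyHyperdet_tensor3_middle,
    cayleyHyperdet_tensor3_right]
  ring

theorem LUequiv.norm_cayleyHyperdet_eq {v w : H3} (h : LUequiv v w) :
    ‖cayleyHyperdet w‖ = ‖cayleyHyperdet v‖ := by
  obtain ⟨U₁, U₂, U₃, hU₁, hU₂, hU₃, rfl⟩ := h
  have h₁ : ‖U₁.det‖ = 1 := CStarRing.norm_of_mem_unitary (Matrix.det_of_mem_unitary hU₁)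
  have h₂ : ‖U₂.det‖ = 1 := CStarRing.norm_of_mem_unitary (Matrix.det_of_mem_unitary hU₂)
  have h₃ : ‖U₃.det‖ = 1 := CStarRing.norm_of_mem_unitary (Matrix.det_of_mem_unitary hU₃)
  simp only [cayleyHyperdet_tensor3, norm_mul, norm_pow, h₁, h₂, h₃, one_mul, one_pow]

theorem not_LUequiv_or_not_LUequiv (v : H3) {w₁ w₂ : H3}
    (h : ‖cayleyHyperdet w₁‖ ≠ ‖cayleyHyperdet w₂‖) : ¬LUequiv v w₁ ∨ ¬LUequiv v w₂ := by
  by_contra! ⟨h₁, h₂⟩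
  exact h (h₁.norm_cayleyHyperdet_eq.trans h₂.norm_cayleyHyperdet_eq.symm)

theorem cayleyHyperdet_fiveTermState (a b c d f : ℝ) :
    cayleyHyperdet (fiveTermState a b c d f) = ((a * f) ^ 2 + 4 * a * b * c * d : ℝ) := by
  simp only [cayleyHyperdet, fiveTermState, Prod.mk.injEq, Fin.isValue, zero_ne_one, one_ne_zero,
    and_self, and_true, and_false, ↓reduceIte, zero_mul, mul_zero, add_zero, sub_zero]
  push_cast
  ring

theorem norm_cayleyHyperdet_fiveTermState_ne {a b c d f : ℝ} (ha : 0 < a) (hb : 0 < b)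
    (hc : 0 < c) (hd : 0 < d) (hf : 0 < f) :
    ‖cayleyHyperdet (fiveTermState a b c d f)‖ ≠ ‖cayleyHyperdet (fiveTermState a b c (-d) f)‖ := by
  rw [cayleyHyperdet_fiveTermState, cayleyHyperdet_fiveTermState, Complex.norm_real,
    Complex.norm_real, Real.norm_eq_abs, Real.norm_eq_abs]
  have hbcd : 0 < 4 * a * b * c * d := by positivity
  have haf : 0 < (a * f) ^ 2 := by positivity
  rw [abs_of_pos (by positivity), mul_neg]
  intro h
  cases abs_cases ((a * f) ^ 2 + -(4 * a * b * c * d)) <;> linarith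

noncomputable def smallRoot (s p : ℝ) : ℝ := (s - √(s ^ 2 - 4 * p)) / 2

theorem smallRoot_mul_sub_smallRoot {s p : ℝ} (h : 4 * p ≤ s ^ 2) :
    smallRoot s p * (s - smallRoot s p) = p := by
  have := Real.sq_sqrt (sub_nonneg.2 h)
  unfold smallRoot
  linear_combination (-1 / 4 : ℝ) * this

theorem smallRoot_le_half (s p : ℝ) : smallRoot s p ≤ s / 2 := by
  unfold smallRoot
  linarith [Real.sqrt_nonneg (s ^ 2 - 4 * p)]

theorem smallRoot_mono (s : ℝ) : Monotone (smallRoot s) := by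
  intro p p' h
  unfold smallRoot
  linarith [Real.sqrt_le_sqrt (show s ^ 2 - 4 * p' ≤ s ^ 2 - 4 * p by linarith)]

theorem smallRoot_add_mul {a b : ℝ} (h : a ≤ b) : smallRoot (a + b) (a * b) = a := by
  rw [smallRoot, show (a + b) ^ 2 - 4 * (a * b) = (b - a) ^ 2 by ring,
    Real.sqrt_sq (sub_nonneg.2 h)]
  ring

@[fun_prop]
theorem Continuous.smallRoot {α : Type*} [TopologicalSpace α] {f g : α → ℝ} (hf : Continuous f)
    (hg : Continuous g) : Continuous fun x => smallRoot (f x) (g x) := by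
  unfold _root_.smallRoot
  fun_prop

noncomputable def shiftedRoot (P g h : ℝ) : ℝ := smallRoot (1 - g) (P * (1 - P) - h)

theorem shiftedRoot_zero_zero {P : ℝ} (hP : P ≤ 1 / 2) : shiftedRoot P 0 0 = P := by
  simpa [shiftedRoot] using smallRoot_add_mul (show P ≤ 1 - P by linarith)

theorem shiftedRoot_antitone (P g : ℝ) : Antitone (shiftedRoot P g) :=
  fun _ _ h => smallRoot_mono _ (by linarith)

theorem shiftedRoot_le_half (P g h : ℝ) : shiftedRoot P g h ≤ (1 - g) / 2 :=
  smallRoot_le_half _ _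

theorem shiftedRoot_mul {P g h : ℝ} (hP : 4 * (P * (1 - P)) ≤ (1 - g) ^ 2) (hh : 0 ≤ h) :
    shiftedRoot P g h * (1 - g - shiftedRoot P g h) = P * (1 - P) - h :=
  smallRoot_mul_sub_smallRoot (by linarith)

theorem eventually_shiftedRoot_lt_add {P Q R : ℝ} (hP : P ≤ 1 / 2) (hQ : Q ≤ 1 / 2)
    (hR : R ≤ 1 / 2) (hPQR : P < Q + R) :
    ∀ᶠ g in 𝓝 0, shiftedRoot P g 0 < shiftedRoot Q g g + shiftedRoot R g g := by
  refine ContinuousAt.eventually_lt (by unfold shiftedRoot; fun_prop)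
    (by unfold shiftedRoot; fun_prop) ?_
  simpa only [shiftedRoot_zero_zero hP, shiftedRoot_zero_zero hQ, shiftedRoot_zero_zero hR]

theorem eventually_four_mul_le {P : ℝ} (hP : P < 1 / 2) :
    ∀ᶠ g in 𝓝 (0 : ℝ), 4 * (P * (1 - P)) ≤ (1 - g) ^ 2 :=
  (ContinuousAt.eventually_lt continuousAt_const (by fun_prop) (by nlinarith)).mono
    fun _ h => h.le

theorem shiftedRoot_lt_add {P Q R g h : ℝ} (hh : h ∈ Icc 0 g)
    (hmargin : shiftedRoot P g 0 < shiftedRoot Q g g + shiftedRoot R g g) :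
    shiftedRoot P g h < shiftedRoot Q g h + shiftedRoot R g h := by
  have := shiftedRoot_antitone P g hh.1
  have := shiftedRoot_antitone Q g hh.2
  have := shiftedRoot_antitone R g hh.2
  linarith

section KirwanInterior

variable {P₁ P₂ P₃ : ℝ} (h₁ : P₁ < 1 / 2) (h₂ : P₂ < 1 / 2) (h₃ : P₃ < 1 / 2)
  (t₁ : P₁ < P₂ + P₃) (t₂ : P₂ < P₁ + P₃) (t₃ : P₃ < P₁ + P₂)
include h₁ h₂ h₃ t₁ t₂ t₃

theorem exists_shiftedRoots :
    ∃ g M₁ M₂ M₃ : ℝ, 0 < g ∧ g < 1 ∧ M₁ ≤ (1 - g) / 2 ∧ M₂ ≤ (1 - g) / 2 ∧ M₃ ≤ (1 - g) / 2 ∧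
      M₁ < M₂ + M₃ ∧ M₂ < M₁ + M₃ ∧ M₃ < M₁ + M₂ ∧
      M₁ * (1 - g - M₁) = P₁ * (1 - P₁) - g * ((M₂ + M₃ - M₁) / 2) ∧
      M₂ * (1 - g - M₂) = P₂ * (1 - P₂) - g * ((M₂ + M₃ - M₁) / 2) ∧
      M₃ * (1 - g - M₃) = P₃ * (1 - P₃) - g * ((M₂ + M₃ - M₁) / 2) := by
  have hsmall : ∀ᶠ g in 𝓝 (0 : ℝ), g < 1 ∧
      4 * (P₁ * (1 - P₁)) ≤ (1 - g) ^ 2 ∧ 4 * (P₂ * (1 - P₂)) ≤ (1 - g) ^ 2 ∧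
      4 * (P₃ * (1 - P₃)) ≤ (1 - g) ^ 2 ∧
      shiftedRoot P₁ g 0 < shiftedRoot P₂ g g + shiftedRoot P₃ g g ∧
      shiftedRoot P₂ g 0 < shiftedRoot P₁ g g + shiftedRoot P₃ g g ∧
      shiftedRoot P₃ g 0 < shiftedRoot P₁ g g + shiftedRoot P₂ g g :=
    (eventually_lt_nhds one_pos).and <| (eventually_four_mul_le h₁).and <|
      (eventually_four_mul_le h₂).and <| (eventually_four_mul_le h₃).and <|
      (eventually_shiftedRoot_lt_add h₁.le h₂.le h₃.le t₁).and <|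
      (eventually_shiftedRoot_lt_add h₂.le h₁.le h₃.le t₂).and
      (eventually_shiftedRoot_lt_add h₃.le h₁.le h₂.le t₃)
  obtain ⟨g, ⟨hg1, q₁, q₂, q₃, m₁, m₂, m₃⟩, hg0 : 0 < g⟩ :=
    ((hsmall.filter_mono nhdsWithin_le_nhds).and (self_mem_nhdsWithin (s := Ioi 0))).exists
  let x : ℝ → ℝ := fun h => (shiftedRoot P₂ g h + shiftedRoot P₃ g h - shiftedRoot P₁ g h) / 2
  have hmaps : MapsTo (fun h => g * x h) (Icc 0 g) (Icc 0 g) := by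
    intro h hh
    have hx₀ : 0 ≤ x h := by simp only [x]; linarith [shiftedRoot_lt_add hh m₁]
    have hx₁ : x h ≤ 1 := by
      simp only [x]
      linarith [shiftedRoot_lt_add hh m₃, shiftedRoot_le_half P₂ g h]
    exact ⟨mul_nonneg hg0.le hx₀, mul_le_of_le_one_right hg0.le hx₁⟩
  obtain ⟨h, hh, hfix⟩ := exists_mem_Icc_isFixedPt_of_mapsTo
    (by dsimp only [x]; unfold shiftedRoot; fun_prop) hg0.le hmaps
  refine ⟨g, shiftedRoot P₁ g h, shiftedRoot P₂ g h, shiftedRoot P₃ g h, hg0, hg1,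
    shiftedRoot_le_half _ _ _, shiftedRoot_le_half _ _ _, shiftedRoot_le_half _ _ _,
    shiftedRoot_lt_add hh m₁, shiftedRoot_lt_add hh m₂, shiftedRoot_lt_add hh m₃, ?_, ?_, ?_⟩ <;>
  rw [show g * x h = h from hfix] <;>
  exact shiftedRoot_mul ‹_› hh.1

theorem exists_fiveTermState_weights :
    ∃ x y z t g : ℝ, 0 < x ∧ 0 < y ∧ 0 < z ∧ 0 < t ∧ 0 < g ∧ x + y + z + t + g = 1 ∧
      (x + y) * (z + t) + x * g = P₁ * (1 - P₁) ∧ (x + z) * (y + t) + x * g = P₂ * (1 - P₂) ∧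
      (x + t) * (y + z) + x * g = P₃ * (1 - P₃) := by
  obtain ⟨g, M₁, M₂, M₃, hg, hg1, hM₁, hM₂, hM₃, s₁, s₂, s₃, e₁, e₂, e₃⟩ :=
    exists_shiftedRoots h₁ h₂ h₃ t₁ t₂ t₃
  -- `M₁ = z + t`, `M₂ = x + z`, `M₃ = x + t`
  exact ⟨(M₂ + M₃ - M₁) / 2, 1 - g - (M₁ + M₂ + M₃) / 2, (M₁ + M₂ - M₃) / 2, (M₁ + M₃ - M₂) / 2,
    g, by linarith, by linarith, by linarith, by linarith, hg, by ring, by linear_combination e₁,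
    by linear_combination e₂, by linear_combination e₃⟩

theorem exists_fiveTermState_amplitudes :
    ∃ a b c d f : ℝ, 0 < a ∧ 0 < b ∧ 0 < c ∧ 0 < d ∧ 0 < f ∧
      a ^ 2 + b ^ 2 + c ^ 2 + d ^ 2 + f ^ 2 = 1 ∧
      (a ^ 2 + b ^ 2) * (c ^ 2 + d ^ 2) + a ^ 2 * f ^ 2 = P₁ * (1 - P₁) ∧
      (a ^ 2 + c ^ 2) * (b ^ 2 + d ^ 2) + a ^ 2 * f ^ 2 = P₂ * (1 - P₂) ∧
      (a ^ 2 + d ^ 2) * (b ^ 2 + c ^ 2) + a ^ 2 * f ^ 2 = P₃ * (1 - P₃) := by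
  obtain ⟨x, y, z, t, g, hx, hy, hz, ht, hg, hsum, e₁, e₂, e₃⟩ :=
    exists_fiveTermState_weights h₁ h₂ h₃ t₁ t₂ t₃
  refine ⟨√x, √y, √z, √t, √g, by positivity, by positivity, by positivity, by positivity,
    by positivity, ?_⟩
  simpa only [Real.sq_sqrt hx.le, Real.sq_sqrt hy.le, Real.sq_sqrt hz.le, Real.sq_sqrt ht.le,
    Real.sq_sqrt hg.le] using ⟨hsum, e₁, e₂, e₃⟩

end KirwanInterior

theorem interior_of_Kirwan_polytope_not_determined_up_to_LU
    (v : H3)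
    (hlt1 : p1 v < 1 / 2) (hlt2 : p2 v < 1 / 2) (hlt3 : p3 v < 1 / 2)
    (hpoly1 : p1 v < p2 v + p3 v) (hpoly2 : p2 v < p1 v + p3 v)
    (hpoly3 : p3 v < p1 v + p2 v) :
    ∃ w : H3, normSq3 w = 1 ∧ p1 w = p1 v ∧ p2 w = p2 v ∧ p3 w = p3 v ∧
      ¬ LUequiv v w := by
  obtain ⟨a, b, c, d, f, ha, hb, hc, hd, hf, hnorm, e₁, e₂, e₃⟩ :=
    exists_fiveTermState_amplitudes hlt1 hlt2 hlt3 hpoly1 hpoly2 hpoly3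
  obtain ⟨n, s₁, s₂, s₃⟩ := fiveTermState_spectra hlt1.le hlt2.le hlt3.le hnorm e₁ e₂ e₃
  rw [← neg_sq d] at hnorm e₁ e₂ e₃
  obtain ⟨n', s₁', s₂', s₃'⟩ := fiveTermState_spectra hlt1.le hlt2.le hlt3.le hnorm e₁ e₂ e₃
  rcases not_LUequiv_or_not_LUequiv v (norm_cayleyHyperdet_fiveTermState_ne ha hb hc hd hf)
    with h | h
  exacts [⟨_, n, s₁, s₂, s₃, h⟩, ⟨_, n', s₁', s₂', s₃', h⟩]
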